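/- arXiv:1903.00272 — 3 statements merged into one kernel-verified Lean document; each statement's English description precedes it below -/
import Mathlib

section
/- Let M be a forest (a possibly infinite acyclic simple graph), ā a finite set of vertices with ā ≤ M (i.e., ā is weakly closed in every finite superset of ā inside M), and b a vertex of M with b ∉ ā. Then b ∈ cl*_M(ā) if and only if there is exactly one path p in M from b to ā with the property that p meets ā in exactly one vertex. -/
open SimpleGraph

/-- The predimension of a finite set `A` of vertices: `|A| - e(A)`, where `e(A)` is the
number of edges of the induced subgraph on `A`. -/
noncomputable def delta {V : Type*} (G : SimpleGraph V) (A : Finset V) : ℤ :=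
  (A.card : ℤ) - (Nat.card (G.induce (A : Set V)).edgeSet : ℤ)

/-- `A` is closed in `B` (`A ≤* B`): `A ⊆ B` and `δ(C) > δ(A)` for every finite `C` with
`A ⊊ C ⊆ B`. -/
def Closed {V : Type*} (G : SimpleGraph V) (A B : Finset V) : Prop :=
  A ⊆ B ∧ ∀ C : Finset V, A ⊂ C → C ⊆ B → delta G A < delta G C

/-- `A` is weakly closed in `B` (`A ≤ B`). -/
def WClosed {V : Type*} (G : SimpleGraph V) (A B : Finset V) : Prop :=
  A ⊆ B ∧ ∀ C : Finset V, A ⊆ C → C ⊆ B → delta G A ≤ delta G C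

/-- `A ≤* M` : `A` is closed in every finite superset inside the graph. -/
def ClosedIn {V : Type*} (G : SimpleGraph V) (A : Finset V) : Prop :=
  ∀ B : Finset V, A ⊆ B → Closed G A B

def WClosedIn {V : Type*} (G : SimpleGraph V) (A : Finset V) : Prop :=
  ∀ B : Finset V, A ⊆ B → WClosed G A B

/-- `(A,B)` is a minimal pair. -/
def MinPair {V : Type*} (G : SimpleGraph V) (A B : Finset V) : Prop :=
  A ⊆ B ∧ (∀ C : Finset V, A ⊆ C → C ⊂ B → Closed G A C) ∧ ¬ Closed G A B

def WMinPair {V : Type*} (G : SimpleGraph V) (A B : Finset V) : Prop :=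
  A ⊆ B ∧ (∀ C : Finset V, A ⊆ C → C ⊂ B → WClosed G A C) ∧ ¬ WClosed G A B

/-- `B` is an intrinsic extension of `A`. -/
def IntrinsicExt {V : Type*} (G : SimpleGraph V) (A B : Finset V) : Prop :=
  A ⊆ B ∧ ∀ C : Finset V, A ⊆ C → C ⊂ B → ¬ Closed G C B

def WIntrinsicExt {V : Type*} (G : SimpleGraph V) (A B : Finset V) : Prop :=
  A ⊆ B ∧ ∀ C : Finset V, A ⊆ C → C ⊂ B → ¬ WClosed G C B

/-- The closure `cl*_M(N)`. -/
def clStar {V : Type*} (G : SimpleGraph V) (N : Set V) : Set V :=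
  {b | ∃ A E : Finset V, (A : Set V) ⊆ N ∧ IntrinsicExt G A E ∧ b ∈ E}

/-- The weak closure `cl_M(N)`. -/
def clWeak {V : Type*} (G : SimpleGraph V) (N : Set V) : Set V :=
  {b | ∃ A E : Finset V, (A : Set V) ⊆ N ∧ WIntrinsicExt G A E ∧ b ∈ E}

/-!
In a forest a nonempty finite set has predimension at least one, so a part `R` of a finite set
`E` with no edges to `E \ R` is closed in `E`. Hence every vertex of an intrinsic extension of a
subset of `A` is connected to `A`, and cutting such a connection at its first vertex in `A` gives
a path of the required kind. Suppose two such paths end at different `a₁, a₂ ∈ A`. If `a₁` and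
`a₂` are adjacent, uniqueness of paths in a forest puts `a₂` on the path to `a₁`. Otherwise the
two paths combine to a path from `a₁` to `a₂` of length `n ≥ 2` whose inner vertices avoid `A`:
adding it to `A` adds `n - 1` vertices but `n` edges and lowers the predimension, contradicting
`A ≤ M`. Conversely, the vertices of any walk from `b` to `a` form an intrinsic extension of
`{a}`: a proper subset containing `a` has a neighbour on the walk, and adding it does not increase
the predimension.
-/

namespace SimpleGraph

variable {V : Type*} {G : SimpleGraph V}

lemma IsAcyclic.card_edgeSet_lt [Finite V] [Nonempty V] (h : G.IsAcyclic) :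
    Nat.card G.edgeSet < Nat.card V := by
  obtain ⟨F, hGF, -, hF⟩ := connected_top.exists_isTree_le_of_le_of_isAcyclic le_top h
  have hcard := (isTree_iff_connected_and_card.1 hF).2
  have hle : Nat.card G.edgeSet ≤ Nat.card F.edgeSet :=
    Nat.card_mono (Set.toFinite _) (edgeSet_mono hGF)
  omega

lemma card_edgeSet_induce (s : Set V) :
    Nat.card (G.induce s).edgeSet = (G.edgeSet ∩ s.sym2).ncard := by
  have himage : Sym2.map (↑) '' (G.induce s).edgeSet = G.edgeSet ∩ s.sym2 := by
    ext e
    constructor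
    · rintro ⟨e', he', rfl⟩
      induction e' using Sym2.ind with
      | _ x y => exact ⟨he', by simp⟩
    · rintro ⟨he, hs⟩
      induction e using Sym2.ind with
      | _ x y =>
        rw [Set.mk_mem_sym2_iff] at hs
        exact ⟨s(⟨x, hs.1⟩, ⟨y, hs.2⟩), he, rfl⟩
  rw [← himage, Set.ncard_image_of_injective _ (Sym2.map.injective Subtype.val_injective),
    Nat.card_coe_set_eq]

lemma Reachable.exists_isPath_forall_mem_eq {S : Set V} {x y : V} (h : G.Reachable x y)
    (hy : y ∈ S) : ∃ a ∈ S, ∃ p : G.Walk x a, p.IsPath ∧ ∀ v ∈ p.support, v ∈ S → v = a := by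
  classical
  obtain ⟨w⟩ := h
  suffices ∃ a ∈ S, ∃ p : G.Walk x a, ∀ v ∈ p.support, v ∈ S → v = a by
    obtain ⟨a, ha, p, hp⟩ := this
    exact ⟨a, ha, p.bypass, p.bypass_isPath,
      fun v hv => hp v (p.support_bypass_subset_support hv)⟩
  induction w with
  | nil => exact ⟨_, hy, .nil, by simp⟩
  | @cons x z y hxz w ih =>
    by_cases hx : x ∈ S
    · exact ⟨x, hx, .nil, by simp⟩
    · obtain ⟨a, ha, p, hp⟩ := ih hy
      refine ⟨a, ha, .cons hxz p, fun v hv hvS => ?_⟩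
      rw [Walk.support_cons, List.mem_cons] at hv
      rcases hv with rfl | hv
      · exact absurd hvS hx
      · exact hp v hv hvS

end SimpleGraph

section Predimension

variable {V : Type*} {G : SimpleGraph V} {C D : Finset V}

lemma delta_eq (G : SimpleGraph V) (C : Finset V) :
    delta G C = C.card - (G.edgeSet ∩ C.sym2).ncard := by
  rw [delta, card_edgeSet_induce, Finset.coe_sym2]

lemma finite_edgeSet_inter_sym2 (G : SimpleGraph V) (C : Finset V) :
    (G.edgeSet ∩ C.sym2).Finite :=
  C.sym2.finite_toSet.inter_of_right _

lemma one_le_delta_of_isAcyclic (hG : G.IsAcyclic) (hC : C.Nonempty) : 1 ≤ delta G C := by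
  have : Nonempty (C : Set V) := hC.coe_sort
  have hlt := (hG.induce C).card_edgeSet_lt
  have hcard : Nat.card (C : Set V) = C.card := by simp
  rw [delta, ← hcard]
  omega

lemma delta_union_of_not_adj [DecidableEq V] (hdisj : Disjoint C D)
    (hcross : ∀ x ∈ C, ∀ y ∈ D, ¬G.Adj x y) :
    delta G (C ∪ D) = delta G C + delta G D := by
  have hsplit : G.edgeSet ∩ (C ∪ D).sym2 = (G.edgeSet ∩ C.sym2) ∪ (G.edgeSet ∩ D.sym2) := by
    ext e
    induction e using Sym2.ind with
    | _ x y =>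
      simp only [Set.mem_inter_iff, Set.mem_union, mem_edgeSet, Finset.mem_coe,
        Finset.mk_mem_sym2_iff, Finset.mem_union]
      have := hcross x
      have := hcross y
      grind [G.adj_comm x y]
  have hdisj' : Disjoint (G.edgeSet ∩ C.sym2) (G.edgeSet ∩ D.sym2) := by
    refine Set.disjoint_left.2 fun e hC hD => ?_
    induction e using Sym2.ind with
    | _ x y =>
      exact Finset.disjoint_left.1 hdisj (Finset.mk_mem_sym2_iff.1 hC.2).1
        (Finset.mk_mem_sym2_iff.1 hD.2).1
  rw [delta_eq, delta_eq, delta_eq, hsplit, Set.ncard_union_eq hdisj'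
    (finite_edgeSet_inter_sym2 G C) (finite_edgeSet_inter_sym2 G D),
    Finset.card_union_of_disjoint hdisj]
  push_cast
  ring

lemma delta_add_card_le [DecidableEq V] (hCD : C ⊆ D) {F : Finset (Sym2 V)}
    (hF : ∀ e ∈ F, e ∈ G.edgeSet ∧ e ∈ D.sym2 ∧ e ∉ C.sym2) :
    delta G D + F.card ≤ delta G C + (D \ C).card := by
  have hsub : (G.edgeSet ∩ C.sym2) ∪ F ⊆ G.edgeSet ∩ D.sym2 :=
    Set.union_subset (Set.inter_subset_inter_right _ (Finset.coe_subset.2 (Finset.sym2_mono hCD)))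
      fun e he => ⟨(hF e he).1, (hF e he).2.1⟩
  have hdisj : Disjoint (G.edgeSet ∩ C.sym2) F :=
    Set.disjoint_right.2 fun e he hCe => (hF e he).2.2 hCe.2
  have hcard := Set.ncard_le_ncard hsub (finite_edgeSet_inter_sym2 G D)
  rw [Set.ncard_union_eq hdisj (finite_edgeSet_inter_sym2 G C) F.finite_toSet,
    Set.ncard_coe_finset] at hcard
  rw [delta_eq, delta_eq, Finset.card_sdiff_of_subset hCD]
  have := Finset.card_le_card hCD
  push_cast [this]
  omega

lemma delta_insert_le [DecidableEq V] {u v : V} (hu : u ∈ C) (hv : v ∉ C) (hadj : G.Adj u v) :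
    delta G (insert v C) ≤ delta G C := by
  have h := delta_add_card_le (G := G) (Finset.subset_insert v C) (F := {s(u, v)})
    (by simp [hadj, hu, hv])
  rw [Finset.insert_sdiff_cancel hv, Finset.card_singleton, Finset.card_singleton] at h
  omega

lemma delta_union_support_toFinset_lt [DecidableEq V] {A : Finset V} {a₁ a₂ : V}
    (r : G.Walk a₁ a₂) (hr : r.IsPath) (hne : a₁ ≠ a₂) (hadj : ¬G.Adj a₁ a₂) (ha₁ : a₁ ∈ A)
    (ha₂ : a₂ ∈ A) (hrA : ∀ v ∈ r.support, v ∈ A → v = a₁ ∨ v = a₂) :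
    delta G (A ∪ r.support.toFinset) < delta G A := by
  set T := r.support.toFinset
  -- As `a₁` and `a₂` are not adjacent, every edge of `r` has an endpoint outside `A`.
  have hedges : ∀ e ∈ r.edges.toFinset, e ∈ G.edgeSet ∧ e ∈ (A ∪ T).sym2 ∧ e ∉ A.sym2 := by
    intro e he
    rw [List.mem_toFinset] at he
    refine ⟨r.edges_subset_edgeSet he, ?_⟩
    induction e using Sym2.ind with
    | _ x y =>
      have hx := r.fst_mem_support_of_mem_edges he
      have hy := r.snd_mem_support_of_mem_edges he
      have hxy := r.edges_subset_edgeSet he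
      rw [mem_edgeSet] at hxy
      simp only [Finset.mk_mem_sym2_iff, Finset.mem_union, T, List.mem_toFinset, hx, hy,
        or_true, true_and, not_and]
      intro hxA hyA
      have := G.adj_comm a₁ a₂
      have := G.loopless.irrefl x
      grind
  have hpair : {a₁, a₂} ⊆ T := by simp [Finset.insert_subset_iff, T]
  have hsdiff : (A ∪ T) \ A ⊆ T \ {a₁, a₂} := by
    intro v hv
    simp only [Finset.mem_sdiff, Finset.mem_union, Finset.mem_insert, Finset.mem_singleton] at hv ⊢
    have := hrA v
    grind [List.mem_toFinset]
  have hT : T.card = r.length + 1 := by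
    rw [List.toFinset_card_of_nodup hr.support_nodup, Walk.length_support]
  have hF : r.edges.toFinset.card = r.length := by
    rw [List.toFinset_card_of_nodup hr.isTrail.edges_nodup, Walk.length_edges]
  have h := delta_add_card_le Finset.subset_union_left hedges
  have := Finset.card_le_card hsdiff
  have := Finset.card_le_card hpair
  rw [Finset.card_sdiff_of_subset hpair, Finset.card_pair hne] at *
  omega

end Predimension

section Closure

variable {V : Type*} {G : SimpleGraph V}

lemma WClosedIn.delta_le {A B : Finset V} (hA : WClosedIn G A) (hAB : A ⊆ B) :
    delta G A ≤ delta G B :=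
  (hA B hAB).2 B hAB subset_rfl

lemma not_closed_of_adj [DecidableEq V] {C E : Finset V} {u v : V} (hu : u ∈ C)
    (hv : v ∈ E \ C) (hadj : G.Adj u v) : ¬Closed G C E := by
  rw [Finset.mem_sdiff] at hv
  intro hC
  exact (hC.2 _ (Finset.ssubset_insert hv.2) (Finset.insert_subset hv.1 hC.1)).not_ge
    (delta_insert_le hu hv.2 hadj)

lemma closed_of_not_adj [DecidableEq V] (hG : G.IsAcyclic) {R E : Finset V} (hRE : R ⊆ E)
    (hcross : ∀ x ∈ R, ∀ y ∈ E \ R, ¬G.Adj x y) : Closed G R E := by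
  refine ⟨hRE, fun D hRD hDE => ?_⟩
  have hsplit := delta_union_of_not_adj (G := G) Finset.disjoint_sdiff
    fun x hx y hy => hcross x hx y (Finset.sdiff_subset_sdiff hDE le_rfl hy)
  rw [Finset.union_sdiff_of_subset hRD.subset] at hsplit
  have := one_le_delta_of_isAcyclic hG (Finset.sdiff_nonempty.2 hRD.not_subset)
  omega

lemma intrinsicExt_singleton_support_toFinset [DecidableEq V] {a b : V} (p : G.Walk b a) :
    IntrinsicExt G {a} p.support.toFinset := by
  refine ⟨by simp, fun C haC hCE => ?_⟩
  obtain ⟨z, hzE, hzC⟩ := Finset.exists_of_ssubset hCE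
  have hz : z ∈ p.support := List.mem_toFinset.1 hzE
  obtain ⟨d, hd, hdC, hdC'⟩ := (p.dropUntil z hz).exists_boundary_dart (↑C)ᶜ hzC
    (by simpa using haC)
  refine not_closed_of_adj (not_not.1 hdC') (Finset.mem_sdiff.2 ⟨?_, hdC⟩) d.adj.symm
  exact List.mem_toFinset.2
    (p.dart_fst_mem_support_of_mem_darts (p.darts_dropUntil_subset_darts hz hd))

lemma exists_reachable_of_mem_clStar (hG : G.IsAcyclic) {N : Set V} {b : V}
    (hb : b ∈ clStar G N) : ∃ a ∈ N, G.Reachable a b := by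
  classical
  obtain ⟨A, E, hAN, ⟨hAE, hE⟩, hbE⟩ := hb
  -- The part of `E` reachable from `A` is closed in `E`, so it is all of `E`.
  let R := E.filter fun v => ∃ a ∈ A, G.Reachable a v
  have hAR : A ⊆ R := fun a ha => Finset.mem_filter.2 ⟨hAE ha, a, ha, .rfl⟩
  have hcross : ∀ x ∈ R, ∀ y ∈ E \ R, ¬G.Adj x y := by
    intro x hx y hy hxy
    obtain ⟨-, a, ha, hax⟩ := Finset.mem_filter.1 hx
    rw [Finset.mem_sdiff] at hy
    exact hy.2 (Finset.mem_filter.2 ⟨hy.1, a, ha, hax.trans hxy.reachable⟩)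
  by_contra! hN
  have hbR : b ∉ R := by
    rintro hb
    obtain ⟨-, a, ha, hab⟩ := Finset.mem_filter.1 hb
    exact hN a (hAN ha) hab
  exact hE R hAR ⟨Finset.filter_subset _ _, fun h => hbR (h hbE)⟩
    (closed_of_not_adj hG (Finset.filter_subset _ _) hcross)

lemma WClosedIn.eq_of_isPath {A : Finset V} (hA : WClosedIn G A) (hG : G.IsAcyclic) {b a₁ a₂ : V}
    {p₁ : G.Walk b a₁} {p₂ : G.Walk b a₂}
    (ha₁ : a₁ ∈ A) (hp₁ : p₁.IsPath) (hp₁A : ∀ v ∈ p₁.support, v ∈ A → v = a₁)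
    (ha₂ : a₂ ∈ A) (hp₂ : p₂.IsPath) (hp₂A : ∀ v ∈ p₂.support, v ∈ A → v = a₂) :
    a₁ = a₂ := by
  classical
  by_contra hne
  by_cases hadj : G.Adj a₁ a₂
  · -- `p₂` followed by the edge `a₂a₁` is the path `p₁`, which therefore passes through `a₂`.
    have ha₁p₂ : a₁ ∉ p₂.support := fun h => hne (hp₂A a₁ h ha₁)
    exact hne (hp₁A a₂ (hG.mem_support_of_ne_mem_support_of_adj_of_isPath hp₁ hp₂ hadj ha₁p₂)
      ha₂).symm
  · let r := (p₁.reverse.append p₂).bypass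
    have hrA : ∀ v ∈ r.support, v ∈ A → v = a₁ ∨ v = a₂ := by
      intro v hv hvA
      have := (p₁.reverse.append p₂).support_bypass_subset_support hv
      rw [Walk.mem_support_append_iff, Walk.support_reverse, List.mem_reverse] at this
      exact this.imp (hp₁A v · hvA) (hp₂A v · hvA)
    exact (delta_union_support_toFinset_lt r (Walk.bypass_isPath _) hne hadj ha₁ ha₂ hrA).not_ge
      (hA.delta_le Finset.subset_union_left)

end Closure

theorem stmt_10_general {V : Type*} (G : SimpleGraph V) (hG : G.IsAcyclic) (A : Finset V)
    (hA : WClosedIn G A) (b : V) :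
    b ∈ clStar G (A : Set V) ↔
      ∃! q : Σ a : V, G.Walk b a,
        q.1 ∈ A ∧ q.2.IsPath ∧ ∀ v ∈ q.2.support, v ∈ A → v = q.1 := by
  classical
  constructor
  · intro hb
    obtain ⟨a₀, ha₀, hb⟩ := exists_reachable_of_mem_clStar hG hb
    obtain ⟨a, ha, p, hp, hpA⟩ := hb.symm.exists_isPath_forall_mem_eq ha₀
    refine ⟨⟨a, p⟩, ⟨ha, hp, hpA⟩, ?_⟩
    rintro ⟨a', p'⟩ ⟨ha', hp', hp'A⟩
    obtain rfl := hA.eq_of_isPath hG ha' hp' hp'A ha hp hpA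
    obtain rfl : p' = p := congrArg Subtype.val ((hG.subsingleton_path b _).elim ⟨p', hp'⟩ ⟨p, hp⟩)
    rfl
  · rintro ⟨⟨a, p⟩, ⟨ha, -⟩, -⟩
    exact ⟨{a}, p.support.toFinset, by simpa using ha,
      intrinsicExt_singleton_support_toFinset p, by simp⟩

/-- Let `M` be a (possibly infinite) forest, `ā` a finite set of vertices
with `ā ≤ M` (weakly closed in every finite superset), and `b ∉ ā`. Then
`b ∈ cl*_M(ā)` iff there is exactly one path `p` in `M` from `b` to `ā` meeting `ā`
in exactly one vertex. -/
theorem stmt_10 {V : Type*} (G : SimpleGraph V) (hG : G.IsAcyclic) (A : Finset V)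
    (hA : WClosedIn G A) (b : V) (hb : b ∉ A) :
    b ∈ clStar G (A : Set V) ↔
      ∃! q : Σ a : V, G.Walk b a,
        q.1 ∈ A ∧ q.2.IsPath ∧ ∀ v ∈ q.2.support, v ∈ A → v = q.1 :=
  stmt_10_general G hG A hA b
end

section
/- For each m ∈ ω there is a first-order formula γ*_m(x₁,…,x_m) in the language with one binary relation R — namely ∀y(⋀_{i=1}^m y ≠ x_i → ⋀_{i=1}^m ¬R(x_i,y)) — such that for every forest M (a possibly infinite acyclic simple graph, viewed as a structure in this language) and every m-tuple ā of vertices of M: M ⊨ γ*_m(ā) if and only if the set of entries of ā is closed in M (ā ≤* M). -/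
open SimpleGraph

open FirstOrder FirstOrder.Language

/-- The old (Lean 4.14-era Mathlib) `BoundedFormula.iInf` over a finset. -/
noncomputable def finsetIInf {L : Language} {α β : Type*} {n : ℕ} (s : Finset β)
    (f : β → L.BoundedFormula α n) : L.BoundedFormula α n :=
  (s.toList.map f).foldr (· ⊓ ·) ⊤

/-- The formula `γ*_m(x₁,…,x_m) := ∀y(⋀_{i=1}^m y ≠ x_i → ⋀_{i=1}^m ¬R(x_i,y))` in the
language of graphs (one binary relation `R`, i.e. `adj`). -/
noncomputable def gammaStar (m : ℕ) : Language.graph.Formula (Fin m) :=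
  BoundedFormula.all
    ((finsetIInf Finset.univ fun i : Fin m =>
        ∼(Term.bdEqual (&0) (Term.var (Sum.inl i)))) ⟹
      (finsetIInf Finset.univ fun i : Fin m =>
        ∼(Relations.boundedFormula₂ adj (Term.var (Sum.inl i)) (&0))))

/-!
In a forest every nonempty finite set `D` spans at most `|D| - 1` edges (extend the induced forest
to a spanning tree of the complete graph on `D`), so `δ(D) ≥ 1`. Hence if no edge leaves `A`, then
`δ(C) ≥ δ(A) + δ(C \ A) > δ(A)` for every `A ⊊ C`; conversely an edge from `x ∈ A` to `y ∉ A`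
gives `δ(A ∪ {y}) ≤ δ(A)`. So `A ≤* M` exactly when no edge leaves `A`, which is what `γ*_m`
says.
-/

open Finset

namespace SimpleGraph

variable {V : Type*} {G : SimpleGraph V}

lemma IsAcyclic.card_edgeSet_lt_card [Finite V] [Nonempty V] (hG : G.IsAcyclic) :
    Nat.card G.edgeSet < Nat.card V := by
  obtain ⟨T, hGT, -, hT⟩ := connected_top.exists_isTree_le_of_le_of_isAcyclic le_top hG
  have hcard := (isTree_iff_connected_and_card.mp hT).2
  have : Nat.card G.edgeSet ≤ Nat.card T.edgeSet :=
    Nat.card_mono (Set.toFinite _) (edgeSet_mono hGT)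
  omega

lemma IsAcyclic.delta_pos (hG : G.IsAcyclic) {D : Finset V} (hD : D.Nonempty) :
    0 < delta G D := by
  have : Nonempty (D : Set V) := hD.coe_sort
  have := (hG.induce (D : Set V)).card_edgeSet_lt_card
  rw [Nat.card_coe_set_eq (D : Set V), Set.ncard_coe_finset] at this
  rw [delta]
  omega

lemma card_edgeSet_induce_s15 [DecidableRel G.Adj] (A : Finset V) :
    Nat.card (G.induce (A : Set V)).edgeSet = #{e ∈ A.sym2 | e ∈ G.edgeSet} := by
  have himage : Sym2.map Subtype.val '' (G.induce (A : Set V)).edgeSet =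
      ↑({e ∈ A.sym2 | e ∈ G.edgeSet} : Finset (Sym2 V)) := by
    ext e
    induction e using Sym2.ind with
    | _ x y =>
      simp only [Set.mem_image, Sym2.exists, mem_edgeSet, comap_adj, Sym2.map_mk, coe_filter,
        Set.mem_ofPred_eq, mk_mem_sym2_iff, Subtype.exists, Function.Embedding.subtype_apply,
        Finset.mem_coe]
      constructor
      · rintro ⟨x', hx', y', hy', hadj, heq⟩
        rcases Sym2.eq_iff.mp heq with ⟨rfl, rfl⟩ | ⟨rfl, rfl⟩
        exacts [⟨⟨hx', hy'⟩, hadj⟩, ⟨⟨hy', hx'⟩, hadj.symm⟩]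
      · rintro ⟨⟨hx, hy⟩, hadj⟩
        exact ⟨x, hx, y, hy, hadj, rfl⟩
  rw [← Nat.card_image_of_injective (Sym2.map.injective Subtype.val_injective), himage,
    Nat.card_coe_set_eq, Set.ncard_coe_finset]

lemma delta_eq_card_sub_card [DecidableRel G.Adj] (A : Finset V) :
    delta G A = #A - #{e ∈ A.sym2 | e ∈ G.edgeSet} := by
  rw [delta, card_edgeSet_induce_s15]

lemma delta_insert_le [DecidableEq V] {A : Finset V} {x y : V} (hx : x ∈ A) (hy : y ∉ A)
    (hxy : G.Adj x y) :
    delta G (insert y A) ≤ delta G A := by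
  classical
  have hlt : #{e ∈ A.sym2 | e ∈ G.edgeSet} < #{e ∈ (insert y A).sym2 | e ∈ G.edgeSet} := by
    refine card_lt_card ((ssubset_iff_of_subset ?_).mpr ⟨s(x, y), ?_, ?_⟩)
    · exact filter_subset_filter _ (sym2_mono (subset_insert y A))
    · simp [hx, hxy]
    · simp [hy]
  rw [delta_eq_card_sub_card, delta_eq_card_sub_card, card_insert_of_notMem hy]
  omega

lemma delta_add_delta_sdiff_le [DecidableEq V] {A C : Finset V} (hAC : A ⊆ C)
    (hA : ∀ x ∈ A, ∀ y, G.Adj x y → y ∈ A) :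
    delta G A + delta G (C \ A) ≤ delta G C := by
  classical
  have hsplit : {e ∈ C.sym2 | e ∈ G.edgeSet} ⊆
      {e ∈ A.sym2 | e ∈ G.edgeSet} ∪ {e ∈ (C \ A).sym2 | e ∈ G.edgeSet} := by
    intro e he
    induction e using Sym2.ind with
    | _ x y =>
      simp only [mem_filter, mem_union, mk_mem_sym2_iff, mem_sdiff, mem_edgeSet] at he ⊢
      grind [adj_comm]
  have := (card_le_card hsplit).trans (card_union_le _ _)
  have := card_sdiff_add_card_eq_card hAC
  rw [delta_eq_card_sub_card, delta_eq_card_sub_card, delta_eq_card_sub_card]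
  omega

lemma closedIn_iff_forall_adj_mem (hG : G.IsAcyclic) (A : Finset V) :
    ClosedIn G A ↔ ∀ x ∈ A, ∀ y, G.Adj x y → y ∈ A := by
  classical
  constructor
  · intro h x hx y hxy
    by_contra hy
    have := (h _ (subset_insert y A)).2 _ (ssubset_insert hy) subset_rfl
    exact (delta_insert_le hx hy hxy).not_gt this
  · intro h B hAB
    refine ⟨hAB, fun C hAC _ => ?_⟩
    have := hG.delta_pos (sdiff_nonempty.mpr hAC.not_subset)
    have := delta_add_delta_sdiff_le hAC.subset h
    omega

end SimpleGraph

lemma realize_finsetIInf {L : Language} {M : Type*} [L.Structure M] {α β : Type*} {n : ℕ}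
    (s : Finset β) (f : β → L.BoundedFormula α n) (v : α → M) (xs : Fin n → M) :
    (finsetIInf s f).Realize v xs ↔ ∀ b ∈ s, (f b).Realize v xs := by
  simp [finsetIInf]

lemma realize_gammaStar {V : Type*} (G : SimpleGraph V) {m : ℕ} (a : Fin m → V) :
    @Formula.Realize Language.graph V G.structure (Fin m) (gammaStar m) a ↔
      ∀ y, (∀ i, y ≠ a i) → ∀ i, ¬ G.Adj (a i) y := by
  let _ := G.structure
  have hadj (x y : V) : Structure.RelMap adj ![x, y] ↔ G.Adj x y := Iff.rfl
  simp [gammaStar, Formula.Realize, realize_finsetIInf, hadj, Fin.snoc]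

/-- for every forest `M` (viewed as a structure in the language of graphs)
and every `m`-tuple `ā` of its vertices, `M ⊨ γ*_m(ā)` iff the set of entries of `ā`
is closed in `M` (`ā ≤* M`). -/
theorem stmt_15 (m : ℕ) (V : Type*) [DecidableEq V] (G : SimpleGraph V)
    (hG : G.IsAcyclic) (a : Fin m → V) :
    (@FirstOrder.Language.Formula.Realize Language.graph V G.structure (Fin m)
        (gammaStar m) a) ↔
      ClosedIn G (Finset.univ.image a) := by
  rw [realize_gammaStar, G.closedIn_iff_forall_adj_mem hG]
  grind
end

section
/- Let M be a forest (a possibly infinite acyclic simple graph), A and B sets of vertices of M, and b a vertex of M. If b ∈ cl*_M(A ∪ B) \ cl*_M(B), then b ∈ cl*_M(A). -/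
open SimpleGraph

section Aux
open Finset
variable {V : Type*}

/-- Edge finset of the induced subgraph on `A`, as a finset of `Sym2 V`. -/
noncomputable def eF (G : SimpleGraph V) (A : Finset V) : Finset (Sym2 V) :=
  @Finset.filter _ (fun e => e ∈ G.edgeSet) (Classical.decPred _) A.sym2

lemma mem_eF {G : SimpleGraph V} {A : Finset V} {e : Sym2 V} :
    e ∈ eF G A ↔ e ∈ A.sym2 ∧ e ∈ G.edgeSet := by
  simp [eF, Finset.mem_filter]

lemma nat_card_edgeSet (G : SimpleGraph V) (A : Finset V) :
    Nat.card (G.induce (A : Set V)).edgeSet = (eF G A).card := by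
  classical
  have hinj : Function.Injective (Sym2.map (Subtype.val : ↥(A : Set V) → V)) :=
    by exact Sym2.map.injective Subtype.val_injective
  have himg : Sym2.map (Subtype.val : ↥(A : Set V) → V) '' (G.induce (A : Set V)).edgeSet
      = ↑(eF G A) := by
    ext e
    constructor
    · rintro ⟨e', he', rfl⟩
      induction e' using Sym2.ind with
      | _ x y =>
        rw [SimpleGraph.mem_edgeSet] at he'
        have hadj : G.Adj (x : V) (y : V) := he'
        simp [mem_eF, Finset.mk_mem_sym2_iff, hadj, x.2, y.2]
    · intro he
      rw [Finset.mem_coe, mem_eF] at he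
      induction e using Sym2.ind with
      | _ x y =>
        rw [Finset.mk_mem_sym2_iff] at he
        obtain ⟨⟨hx, hy⟩, hadj⟩ := he
        rw [SimpleGraph.mem_edgeSet] at hadj
        refine ⟨s(⟨x, by simpa using hx⟩, ⟨y, by simpa using hy⟩), ?_, rfl⟩
        exact hadj
  calc Nat.card (G.induce (A : Set V)).edgeSet
      = ((G.induce (A : Set V)).edgeSet).ncard := Nat.card_coe_set_eq _
    _ = (Sym2.map (Subtype.val : ↥(A : Set V) → V) '' (G.induce (A : Set V)).edgeSet).ncard :=
        (Set.ncard_image_of_injective _ hinj).symm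
    _ = (eF G A).card := by rw [himg, Set.ncard_coe_finset]

lemma delta_eq_s17 (G : SimpleGraph V) (A : Finset V) :
    delta G A = (A.card : ℤ) - ((eF G A).card : ℤ) := by
  rw [delta, nat_card_edgeSet]

lemma eF_mono (G : SimpleGraph V) {C D : Finset V} (h : C ⊆ D) : eF G C ⊆ eF G D := by
  intro e he
  rw [mem_eF] at he ⊢
  exact ⟨Finset.sym2_mono h he.1, he.2⟩

lemma eF_insert [DecidableEq V] (G : SimpleGraph V) {C : Finset V} {u v : V}
    (hu : u ∈ C) (hv : v ∉ C) (hadj : G.Adj u v) :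
    (eF G C).card + 1 ≤ (eF G (insert v C)).card := by
  have hss : eF G C ⊂ eF G (insert v C) := by
    refine ⟨eF_mono G (Finset.subset_insert _ _), fun hsub => ?_⟩
    have hmem : s(u, v) ∈ eF G (insert v C) := by
      rw [mem_eF, Finset.mk_mem_sym2_iff]
      exact ⟨⟨Finset.mem_insert_of_mem hu, Finset.mem_insert_self _ _⟩, hadj⟩
    have := hsub hmem
    rw [mem_eF, Finset.mk_mem_sym2_iff] at this
    exact hv this.1.2
  exact Finset.card_lt_card hss

lemma eF_split [DecidableEq V] (G : SimpleGraph V) {C D : Finset V} (hCD : C ⊆ D)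
    (hcross : ∀ x ∈ C, ∀ y ∈ D, G.Adj x y → y ∈ C) :
    (eF G D).card ≤ (eF G C).card + (eF G (D \ C)).card := by
  have hsub : eF G D ⊆ eF G C ∪ eF G (D \ C) := by
    intro e he
    induction e using Sym2.ind with
    | _ x y =>
      rw [mem_eF, Finset.mk_mem_sym2_iff] at he
      obtain ⟨⟨hx, hy⟩, hadj⟩ := he
      rw [SimpleGraph.mem_edgeSet] at hadj
      rw [Finset.mem_union]
      by_cases hxC : x ∈ C
      · left
        have hyC : y ∈ C := hcross x hxC y hy hadj
        rw [mem_eF, Finset.mk_mem_sym2_iff]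
        exact ⟨⟨hxC, hyC⟩, hadj⟩
      · right
        have hyC : y ∉ C := fun hyC => hxC (hcross y hyC x hx hadj.symm)
        rw [mem_eF, Finset.mk_mem_sym2_iff]
        exact ⟨⟨Finset.mem_sdiff.2 ⟨hx, hxC⟩, Finset.mem_sdiff.2 ⟨hy, hyC⟩⟩, hadj⟩
  calc (eF G D).card ≤ (eF G C ∪ eF G (D \ C)).card := Finset.card_le_card hsub
    _ ≤ (eF G C).card + (eF G (D \ C)).card := Finset.card_union_le _ _

lemma induce_isAcyclic {G : SimpleGraph V} (hG : G.IsAcyclic) (s : Set V) :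
    (G.induce s).IsAcyclic := by
  intro v c hc
  exact hG ((c.map (SimpleGraph.Embedding.induce (G := G) s).toHom))
    ((SimpleGraph.Walk.map_isCycle_iff_of_injective
      (SimpleGraph.Embedding.induce (G := G) s).injective).2 hc)

lemma forest_bound {G : SimpleGraph V} (hG : G.IsAcyclic) :
    ∀ S : Finset V, S.Nonempty → (eF G S).card < S.card := by
  classical
  intro S
  induction S using Finset.strongInduction with
  | _ S ih =>
    intro hS
    obtain ⟨v, hv⟩ := hS
    have hvS : (v : V) ∈ (S : Set V) := by simpa using hv
    set C : Finset V := S.filter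
      (fun x => ∃ h : x ∈ (S : Set V), (G.induce (S : Set V)).Reachable ⟨v, hvS⟩ ⟨x, h⟩)
      with hCdef
    have hCS : C ⊆ S := Finset.filter_subset _ _
    have hvC : v ∈ C := Finset.mem_filter.2 ⟨hv, ⟨hvS, SimpleGraph.Reachable.refl _⟩⟩
    have hcross : ∀ x ∈ C, ∀ y ∈ S, G.Adj x y → y ∈ C := by
      intro x hx y hy hadj
      obtain ⟨hxS, hxS', hr⟩ := Finset.mem_filter.1 hx
      have hyS : (y : V) ∈ (S : Set V) := by simpa using hy
      have hadj' : (G.induce (S : Set V)).Adj ⟨x, hxS'⟩ ⟨y, hyS⟩ := hadj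
      exact Finset.mem_filter.2 ⟨hy, ⟨hyS, hr.trans hadj'.reachable⟩⟩
    by_cases hCeq : C = S
    · have hpre : (G.induce (S : Set V)).Preconnected := by
        have hre : ∀ x : ↥(S : Set V), (G.induce (S : Set V)).Reachable ⟨v, hvS⟩ x := by
          intro x
          have hxC : (x : V) ∈ C := by rw [hCeq]; simpa using x.2
          obtain ⟨hxS, hxS', hr⟩ := Finset.mem_filter.1 hxC
          have : (⟨(x : V), hxS'⟩ : ↥(S : Set V)) = x := Subtype.ext rfl
          rwa [this] at hr
        intro x y
        exact (hre x).symm.trans (hre y)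
      have hnonempty : Nonempty ↥(S : Set V) := ⟨⟨v, hvS⟩⟩
      have htree : (G.induce (S : Set V)).IsTree :=
        ⟨⟨hpre⟩, induce_isAcyclic hG _⟩
      letI : Fintype ↥(S : Set V) := FinsetCoe.fintype S
      letI : Fintype (G.induce (S : Set V)).edgeSet := Fintype.ofFinite _
      have hcard := htree.card_edgeFinset
      have h5 : Nat.card (G.induce (S : Set V)).edgeSet
          = (G.induce (S : Set V)).edgeFinset.card := by
        rw [Nat.card_eq_fintype_card, SimpleGraph.edgeFinset, Set.toFinset_card]
      have h6 : Fintype.card ↥(S : Set V) = S.card := by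
        rw [← Nat.card_eq_fintype_card, Nat.card_coe_set_eq, Set.ncard_coe_finset]
      have h7 := nat_card_edgeSet G S
      omega
    · have hCss : C ⊂ S := ⟨hCS, fun h => hCeq (Finset.Subset.antisymm hCS h)⟩
      have hSC : (S \ C).Nonempty := by
        obtain ⟨y, hyS, hyC⟩ := Finset.exists_of_ssubset hCss
        exact ⟨y, Finset.mem_sdiff.2 ⟨hyS, hyC⟩⟩
      have hss2 : S \ C ⊂ S := Finset.sdiff_ssubset hCS ⟨v, hvC⟩
      have h1 := ih C hCss ⟨v, hvC⟩
      have h2 := ih (S \ C) hss2 hSC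
      have h3 := eF_split G hCS hcross
      have h4 : (S \ C).card + C.card = S.card := Finset.card_sdiff_add_card_eq_card hCS
      omega

lemma reach_of_intrinsic {G : SimpleGraph V} (hG : G.IsAcyclic) {A E : Finset V} {b : V}
    (hIE : IntrinsicExt G A E) (hb : b ∈ E) : ∃ a ∈ A, G.Reachable a b := by
  classical
  by_contra hcon
  push_neg at hcon
  set C : Finset V := E.filter (fun x => ∃ a ∈ A, G.Reachable a x) with hCdef
  have hCE : C ⊆ E := Finset.filter_subset _ _
  have hAC : A ⊆ C := fun a ha =>
    Finset.mem_filter.2 ⟨hIE.1 ha, a, ha, SimpleGraph.Reachable.refl _⟩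
  have hbC : b ∉ C := by
    intro hbC
    obtain ⟨-, a, ha, hr⟩ := Finset.mem_filter.1 hbC
    exact hcon a ha hr
  have hCssE : C ⊂ E := ⟨hCE, fun h => hbC (h hb)⟩
  refine hIE.2 C hAC hCssE ⟨hCE, ?_⟩
  intro D hCD hDE
  have hcross : ∀ x ∈ C, ∀ y ∈ D, G.Adj x y → y ∈ C := by
    intro x hx y hy hadj
    obtain ⟨hxE, a, ha, hr⟩ := Finset.mem_filter.1 hx
    exact Finset.mem_filter.2 ⟨hDE hy, a, ha, hr.trans hadj.reachable⟩
  have h1 := eF_split G hCD.subset hcross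
  have hne : (D \ C).Nonempty := by
    obtain ⟨y, hyD, hyC⟩ := Finset.exists_of_ssubset hCD
    exact ⟨y, Finset.mem_sdiff.2 ⟨hyD, hyC⟩⟩
  have h2 := forest_bound hG (D \ C) hne
  have h3 : (D \ C).card + C.card = D.card := Finset.card_sdiff_add_card_eq_card hCD.subset
  rw [delta_eq_s17, delta_eq_s17]
  push_cast
  omega

lemma boundary {G : SimpleGraph V} (C : Finset V) :
    ∀ {x y : V} (q : G.Walk x y), x ∈ C → y ∉ C →
      ∃ u w, G.Adj u w ∧ u ∈ C ∧ w ∉ C ∧ w ∈ q.support := by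
  intro x y q
  induction q with
  | nil => intro hx hy; exact absurd hx hy
  | @cons a c d h q ih =>
    intro hx hy
    by_cases hc : c ∈ C
    · obtain ⟨u, w, h1, h2, h3, h4⟩ := ih hc hy
      exact ⟨u, w, h1, h2, h3, by
        rw [SimpleGraph.Walk.support_cons]; exact List.mem_cons_of_mem _ h4⟩
    · exact ⟨a, c, h, hx, hc, by
        rw [SimpleGraph.Walk.support_cons]
        exact List.mem_cons_of_mem _ q.start_mem_support⟩

lemma mem_clStar_of_reachable {G : SimpleGraph V} {a b : V} (hr : G.Reachable a b)
    {N : Set V} (ha : a ∈ N) : b ∈ clStar G N := by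
  classical
  obtain ⟨p⟩ := hr
  refine ⟨{a}, p.support.toFinset, by simpa using ha, ⟨?_, ?_⟩,
    List.mem_toFinset.2 p.end_mem_support⟩
  · simpa using List.mem_toFinset.2 p.start_mem_support
  · intro C hC hCE hClosed
    obtain ⟨w, hwE, hwC⟩ := Finset.exists_of_ssubset hCE
    have hwsup : w ∈ p.support := List.mem_toFinset.1 hwE
    obtain ⟨u, v, hadj, huC, hvC, hvsup⟩ :=
      boundary C (p.takeUntil w hwsup) (hC (Finset.mem_singleton_self a)) hwC
    have hvE : v ∈ p.support.toFinset :=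
      List.mem_toFinset.2 (SimpleGraph.Walk.support_takeUntil_subset p hwsup hvsup)
    have hD : C ⊂ insert v C := Finset.ssubset_insert hvC
    have hDE : insert v C ⊆ p.support.toFinset := Finset.insert_subset hvE hCE.subset
    have h1 := hClosed.2 (insert v C) hD hDE
    have h2 := eF_insert G huC hvC hadj
    have h3 : (insert v C).card = C.card + 1 := Finset.card_insert_of_notMem hvC
    rw [delta_eq_s17, delta_eq_s17] at h1
    push_cast at h1
    omega

end Aux

/-- Let `M` be a (possibly infinite) forest, `A, B` sets of vertices and
`b` a vertex. If `b ∈ cl*_M(A ∪ B) \ cl*_M(B)`, then `b ∈ cl*_M(A)`. -/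
theorem stmt_17 {V : Type*} (G : SimpleGraph V) (hG : G.IsAcyclic)
    (A B : Set V) (b : V)
    (h1 : b ∈ clStar G (A ∪ B)) (h2 : b ∉ clStar G B) :
    b ∈ clStar G A := by
  obtain ⟨A0, E, hA0, hIE, hbE⟩ := h1
  obtain ⟨a, haA0, hr⟩ := reach_of_intrinsic hG hIE hbE
  have haAB : a ∈ A ∪ B := hA0 (Finset.mem_coe.2 haA0)
  rcases haAB with hA | hB
  · exact mem_clStar_of_reachable hr hA
  · exact absurd (mem_clStar_of_reachable hr hB) h2
end
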